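/- arXiv:1607.05246 — 2 statements merged into one kernel-verified Lean document; each statement's English description precedes it below -/
import Mathlib

section
/- For every r ≥ 1, the Favard constant K_r is a rational multiple of π^r. -/
/-!
Grouping the terms of the Favard series in consecutive pairs, `K_r` is `4 / π` times
`∑ j, ε_j / (2j + 1)^(r+1)`, where `ε_j = 1` for odd `r` and `ε_j = (-1)^j` for even `r`.
For odd `r` this is `(1 - 2^(-(r+1))) ζ(r + 1)`, and Euler's formula expresses `ζ(2m)` through
the Bernoulli number `B_{2m}`. For even `r` it is the Fourier sine series
`∑ sin (2π n x) / n^(r+1)` at `x = 1/4`, which is `π^(r+1)` times a rational multiple of the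
Bernoulli polynomial `B_{r+1}(1/4)`.
-/

noncomputable def favardK (r : ℕ) : ℝ :=
  (4 / Real.pi) * ∑' k : ℕ,
    (1 / (4 * (k:ℝ) + 1) ^ (r + 1) + (-1) ^ (r + 1) / (4 * (k:ℝ) + 3) ^ (r + 1))

open Real Nat

namespace HasSum

variable {G : Type*} [AddCommGroup G] [UniformSpace G] [IsUniformAddGroup G] [CompleteSpace G]
  [T2Space G] {f : ℕ → G} {a b : G}

theorem odd_of_even (hf : HasSum f a) (he : HasSum (fun k ↦ f (2 * k)) b) :
    HasSum (fun k ↦ f (2 * k + 1)) (a - b) := by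
  have ho : Summable fun k ↦ f (2 * k + 1) := hf.summable.comp_injective fun i j h ↦ by omega
  rw [← (he.even_add_odd ho.hasSum).unique hf, add_sub_cancel_left]
  exact ho.hasSum

theorem add_consecutive_pairs (hf : HasSum f a) :
    HasSum (fun k ↦ f (2 * k) + f (2 * k + 1)) a := by
  have he : Summable fun k ↦ f (2 * k) := hf.summable.comp_injective fun i j h ↦ by omega
  simpa using he.hasSum.add (hf.odd_of_even he.hasSum)

end HasSum

theorem exists_rat_hasSum_one_div_odd_pow_two_mul {m : ℕ} (hm : m ≠ 0) :
    ∃ q : ℚ, HasSum (fun j : ℕ ↦ 1 / (2 * j + 1 : ℝ) ^ (2 * m)) (q * π ^ (2 * m)) := by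
  set c : ℚ := (-1) ^ (m + 1) * 2 ^ (2 * m - 1) * bernoulli (2 * m) / (2 * m)!
  have hzeta : HasSum (fun n : ℕ ↦ 1 / (n : ℝ) ^ (2 * m)) (c * π ^ (2 * m)) := by
    convert! hasSum_zeta_nat hm using 1
    push_cast [c]
    ring
  have heven : HasSum (fun k : ℕ ↦ 1 / ((2 * k : ℕ) : ℝ) ^ (2 * m))
      ((1 / 2 ^ (2 * m) : ℚ) * (c * π ^ (2 * m))) := by
    convert! hzeta.mul_left ((1 / 2 ^ (2 * m) : ℚ) : ℝ) using 2 with k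
    push_cast
    ring
  refine ⟨(1 - 1 / 2 ^ (2 * m)) * c, ?_⟩
  convert! hzeta.odd_of_even heven using 1
  · ext k
    push_cast
    ring
  · push_cast
    ring

theorem exists_rat_hasSum_neg_one_pow_div_odd_pow_two_mul_add_one {m : ℕ} (hm : m ≠ 0) :
    ∃ q : ℚ, HasSum (fun j : ℕ ↦ (-1) ^ j / (2 * j + 1 : ℝ) ^ (2 * m + 1))
      (q * π ^ (2 * m + 1)) := by
  have hx : (1 / 4 : ℝ) ∈ Set.Icc 0 1 := by norm_num
  have hsin := hasSum_one_div_nat_pow_mul_sin hm hx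
  have heven : HasSum (fun k : ℕ ↦
      1 / ((2 * k : ℕ) : ℝ) ^ (2 * m + 1) * sin (2 * π * (2 * k : ℕ) * (1 / 4))) 0 := by
    convert! hasSum_zero with k
    rw [show 2 * π * ((2 * k : ℕ) : ℝ) * (1 / 4) = k * π by push_cast; ring, sin_nat_mul_pi,
      mul_zero]
  refine ⟨(-1) ^ (m + 1) * 2 ^ (2 * m + 1) / 2 / (2 * m + 1)! *
    (Polynomial.bernoulli (2 * m + 1)).eval (1 / 4), ?_⟩
  convert! hsin.odd_of_even heven using 1
  · ext j
    rw [show 2 * π * ((2 * j + 1 : ℕ) : ℝ) * (1 / 4) = (j : ℕ) * π + π / 2 by push_cast; ring,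
      sin_add_pi_div_two, cos_nat_mul_pi]
    push_cast
    ring
  · rw [sub_zero, Polynomial.eval_map, show (1 / 4 : ℝ) = algebraMap ℚ ℝ (1 / 4) by norm_num,
      Polynomial.eval₂_at_apply, eq_ratCast]
    push_cast
    ring

theorem exists_rat_hasSum_neg_one_pow_mul_div_odd_pow {n : ℕ} (hn : 2 ≤ n) :
    ∃ q : ℚ, HasSum (fun j : ℕ ↦ (-1) ^ (j * n) / (2 * j + 1 : ℝ) ^ n) (q * π ^ n) := by
  obtain ⟨m, rfl | rfl⟩ := Nat.even_or_odd' n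
  · obtain ⟨q, hq⟩ := exists_rat_hasSum_one_div_odd_pow_two_mul (m := m) (by omega)
    refine ⟨q, hq.congr_fun fun j ↦ ?_⟩
    rw [mul_left_comm, pow_mul, neg_one_sq, one_pow]
  · obtain ⟨q, hq⟩ := exists_rat_hasSum_neg_one_pow_div_odd_pow_two_mul_add_one (m := m) (by omega)
    refine ⟨q, hq.congr_fun fun j ↦ ?_⟩
    rw [mul_comm j, pow_mul, Odd.neg_one_pow (odd_two_mul_add_one m)]

/-- Every Favard constant `K_r` (for `r ≥ 1`) is a rational multiple of `π^r`. -/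
theorem favardK_rational_multiple_of_pi_pow (r : ℕ) (hr : 1 ≤ r) :
    ∃ q : ℚ, favardK r = (q : ℝ) * Real.pi ^ r := by
  obtain ⟨q, hq⟩ := exists_rat_hasSum_neg_one_pow_mul_div_odd_pow (n := r + 1) (by omega)
  have hK : HasSum (fun k : ℕ ↦
      1 / (4 * (k : ℝ) + 1) ^ (r + 1) + (-1) ^ (r + 1) / (4 * (k : ℝ) + 3) ^ (r + 1))
      (q * π ^ (r + 1)) := by
    refine hq.add_consecutive_pairs.congr_fun fun k ↦ ?_
    have h_even : (-1 : ℝ) ^ (2 * k * (r + 1)) = 1 := by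
      rw [mul_assoc, pow_mul, neg_one_sq, one_pow]
    have h_odd : (-1 : ℝ) ^ ((2 * k + 1) * (r + 1)) = (-1) ^ (r + 1) := by
      rw [add_mul, one_mul, pow_add, h_even, one_mul]
    rw [h_even, h_odd]
    push_cast
    ring
  refine ⟨4 * q, ?_⟩
  rw [favardK, hK.tsum_eq]
  push_cast
  field_simp
  ring
end

section
/- For all natural numbers n, m ≥ 1 and 0 < h ≤ 1/(2mn), the best L¹ approximation of χ_h^m by trigonometric polynomials of degree ≤ n−1 equals 1: E_{n−1}(χ_h^m)_{L¹} = 1. -/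
noncomputable def chi (h : ℝ) : ℝ → ℝ := fun θ =>
  if |θ - 2 * Real.pi * (round (θ / (2 * Real.pi)) : ℤ)| ≤ Real.pi * h then 1 / h else 0

/-- Convolution on the circle, normalized by \`1/(2π)\`. -/
noncomputable def conv (f g : ℝ → ℝ) : ℝ → ℝ := fun θ =>
  (1 / (2 * Real.pi)) * ∫ φ in (0:ℝ)..(2 * Real.pi), f (θ - φ) * g φ

/-- \`chiConv h m\` is the \`m\`-fold self-convolution \`χ_h ∗ ⋯ ∗ χ_h\` (for \`m ≥ 1\`). -/
noncomputable def chiConv (h : ℝ) : ℕ → ℝ → ℝ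
  | 0 => fun _ => 0
  | 1 => chi h
  | (m + 2) => conv (chi h) (chiConv h (m + 1))

/-- Trigonometric polynomials of degree at most \`n\` (complex coefficients). -/
def trigPoly (n : ℕ) : Set (ℝ → ℂ) :=
  {t | ∃ c : ℤ → ℂ, t = fun θ : ℝ =>
    ∑ k ∈ Finset.Icc (-(n:ℤ)) (n:ℤ), c k * Complex.exp (k * (θ:ℂ) * Complex.I)}

noncomputable def L1norm (f : ℝ → ℂ) : ℝ :=
  (1 / (2 * Real.pi)) * ∫ φ in (0:ℝ)..(2 * Real.pi), ‖f φ‖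

/-- Best approximation in \`L¹(𝕋)\` by trigonometric polynomials of degree at most \`n\`. -/
noncomputable def bestApprox (n : ℕ) (f : ℝ → ℂ) : ℝ :=
  sInf ((fun t : ℝ → ℂ => L1norm (fun θ => f θ - t θ)) '' (trigPoly n))

/-!
`f = χ_h^m` is nonnegative with mean `1` and, since supports add under convolution, vanishes
outside the arcs `|θ - 2πj| ≤ πmh ≤ π/(2n)`, on which `cos nθ ≥ 0`. So the sign `σ` of `cos nθ`
satisfies `fσ = f`, while `σ(θ + π/n) = -σ(θ)` (off the zeros of `cos nθ`) forces
`∫ e^{ikθ} σ = 0` for `|k| < n`, because `e^{ikπ/n} ≠ -1`. Hence for every trigonometric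
polynomial `t` of degree `< n`, `2π‖f - t‖₁ ≥ |∫ (f - t) σ| = ∫ f = 2π`, and `t = 0` attains this.
-/

open MeasureTheory Set Real Function

theorem Function.Periodic.intervalIntegral_comp_add_right {E : Type*} [NormedAddCommGroup E]
    [NormedSpace ℝ E] {F : ℝ → E} {T : ℝ} (hF : Periodic F T) (c : ℝ) :
    ∫ x in (0:ℝ)..T, F (x + c) = ∫ x in (0:ℝ)..T, F x := by
  simpa [add_comm] using hF.intervalIntegral_add_eq c 0

section Convolution

variable {K g : ℝ → ℝ}

theorem conv_nonneg (hK : ∀ x, 0 ≤ K x) (hg : ∀ x, 0 ≤ g x) (θ : ℝ) : 0 ≤ conv K g θ :=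
  mul_nonneg (by positivity) <|
    intervalIntegral.integral_nonneg (by positivity) fun φ _ => mul_nonneg (hK _) (hg φ)

theorem exists_ne_zero_of_conv_ne_zero {θ : ℝ} (hθ : conv K g θ ≠ 0) :
    ∃ φ, K (θ - φ) ≠ 0 ∧ g φ ≠ 0 := by
  contrapose! hθ
  simp only [conv]
  rw [intervalIntegral.integral_congr (g := fun _ => (0:ℝ)), intervalIntegral.integral_zero,
    mul_zero]
  exact fun φ _ => mul_eq_zero.2 ((em (K (θ - φ) = 0)).imp_right (hθ φ))

theorem integrable_kernel_mul_prod {C : ℝ} (hK : Measurable K) (hKC : ∀ x, ‖K x‖ ≤ C)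
    (hg : IntervalIntegrable g volume 0 (2 * π)) :
    Integrable (fun p : ℝ × ℝ => K (p.1 - p.2) * g p.2)
      ((volume.restrict (Ioc 0 (2 * π))).prod (volume.restrict (Ioc 0 (2 * π)))) := by
  have hg' : Integrable g (volume.restrict (Ioc 0 (2 * π))) :=
    (intervalIntegrable_iff_integrableOn_Ioc_of_le (by positivity)).1 hg
  exact (hg'.comp_snd _).bdd_mul (hK.comp (measurable_fst.sub measurable_snd)).aestronglyMeasurable
    (ae_of_all _ fun p => hKC _)

theorem intervalIntegrable_conv {C : ℝ} (hK : Measurable K) (hKC : ∀ x, ‖K x‖ ≤ C)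
    (hg : IntervalIntegrable g volume 0 (2 * π)) :
    IntervalIntegrable (conv K g) volume 0 (2 * π) := by
  rw [intervalIntegrable_iff_integrableOn_Ioc_of_le (by positivity)]
  have := ((integrable_kernel_mul_prod hK hKC hg).integral_prod_left).const_mul (1 / (2 * π))
  refine this.congr (ae_of_all _ fun θ => ?_)
  simp only [conv, intervalIntegral.integral_of_le (by positivity : (0:ℝ) ≤ 2 * π)]

theorem integral_conv {C : ℝ} (hKp : Periodic K (2 * π)) (hK : Measurable K)
    (hKC : ∀ x, ‖K x‖ ≤ C) (hg : IntervalIntegrable g volume 0 (2 * π)) :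
    ∫ θ in (0:ℝ)..2 * π, conv K g θ =
      1 / (2 * π) * (∫ x in (0:ℝ)..2 * π, K x) * ∫ φ in (0:ℝ)..2 * π, g φ := by
  have hswap := intervalIntegral_intervalIntegral_swap (a := 0) (b := 2 * π) (c := 0) (d := 2 * π)
    (F := fun θ φ => K (θ - φ) * g φ) (by
      rw [uIoc_of_le (by positivity), IntegrableOn, Measure.volume_eq_prod, ← Measure.prod_restrict]
      exact integrable_kernel_mul_prod hK hKC hg)
  have hinner (φ : ℝ) : ∫ θ in (0:ℝ)..2 * π, K (θ - φ) = ∫ x in (0:ℝ)..2 * π, K x := by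
    simpa [sub_eq_add_neg] using hKp.intervalIntegral_comp_add_right (-φ)
  simp only [conv, intervalIntegral.integral_const_mul, hswap, intervalIntegral.integral_mul_const,
    hinner]
  ring

end Convolution

section Chi

variable {h : ℝ}

theorem chi_eq_indicator (h θ : ℝ) :
    chi h θ = (Metric.closedBall (0 : AddCircle (2 * π)) (π * h)).indicator (fun _ => 1 / h) θ := by
  have hnorm : ‖(θ : AddCircle (2 * π))‖ = |θ - 2 * π * round (θ / (2 * π))| := by
    rw [AddCircle.norm_eq, inv_mul_eq_div, mul_comm _ (2 * π)]
  simp only [chi, indicator, mem_closedBall_zero_iff, hnorm]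

theorem chi_periodic (h : ℝ) : Periodic (chi h) (2 * π) := fun θ => by
  rw [chi_eq_indicator, chi_eq_indicator, AddCircle.coe_add_period]

theorem measurable_chi (h : ℝ) : Measurable (chi h) := by
  rw [show chi h = _ from funext (chi_eq_indicator h)]
  exact (measurable_const.indicator Metric.isClosed_closedBall.measurableSet).comp
    AddCircle.measurable_mk'

theorem norm_chi_le (h θ : ℝ) : ‖chi h θ‖ ≤ ‖1 / h‖ := by
  rw [chi_eq_indicator]
  exact norm_indicator_le_norm_self _ _

theorem chi_nonneg (hh : 0 ≤ h) (θ : ℝ) : 0 ≤ chi h θ := by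
  rw [chi_eq_indicator]
  exact indicator_nonneg (fun _ _ => by positivity) _

theorem norm_le_of_chi_ne_zero {θ : ℝ} (hθ : chi h θ ≠ 0) :
    ‖(θ : AddCircle (2 * π))‖ ≤ π * h := by
  rw [chi_eq_indicator] at hθ
  simpa using mem_of_indicator_ne_zero hθ

theorem integral_chi (h0 : 0 < h) (h1 : h ≤ 1) : ∫ θ in (0:ℝ)..2 * π, chi h θ = 2 * π := by
  have : Fact (0 < 2 * π) := ⟨by positivity⟩
  simp_rw [chi_eq_indicator]
  have hlift := AddCircle.intervalIntegral_preimage (2 * π) 0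
    ((Metric.closedBall (0 : AddCircle (2 * π)) (π * h)).indicator fun _ => 1 / h)
  rw [zero_add] at hlift
  rw [hlift, integral_indicator_const _ Metric.isClosed_closedBall.measurableSet, measureReal_def,
    AddCircle.volume_closedBall, min_eq_right (by nlinarith [pi_pos]), ENNReal.toReal_ofReal
      (by positivity), smul_eq_mul]
  field_simp

end Chi

section ChiConv

variable {h : ℝ}

theorem intervalIntegrable_chi (h : ℝ) : IntervalIntegrable (chi h) volume 0 (2 * π) :=
  intervalIntegrable_const.mono_fun' (measurable_chi h).aestronglyMeasurable
    (ae_of_all _ (norm_chi_le h))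

theorem chiConv_nonneg (hh : 0 ≤ h) : ∀ m θ, 0 ≤ chiConv h m θ
  | 0, _ => le_rfl
  | 1, θ => chi_nonneg hh θ
  | m + 2, θ => conv_nonneg (chi_nonneg hh) (chiConv_nonneg hh (m + 1)) θ

theorem intervalIntegrable_chiConv (h : ℝ) :
    ∀ m, IntervalIntegrable (chiConv h m) volume 0 (2 * π)
  | 0 => intervalIntegrable_const
  | 1 => intervalIntegrable_chi h
  | m + 2 => intervalIntegrable_conv (measurable_chi h) (norm_chi_le h)
      (intervalIntegrable_chiConv h (m + 1))

theorem norm_le_of_chiConv_ne_zero :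
    ∀ m θ, chiConv h m θ ≠ 0 → ‖(θ : AddCircle (2 * π))‖ ≤ π * (m * h)
  | 0, _, hθ => absurd rfl hθ
  | 1, θ, hθ => by simpa using norm_le_of_chi_ne_zero hθ
  | m + 2, θ, hθ => by
    obtain ⟨φ, hchi, hφ⟩ := exists_ne_zero_of_conv_ne_zero hθ
    calc ‖(θ : AddCircle (2 * π))‖ = ‖((θ - φ : ℝ) : AddCircle (2 * π)) + φ‖ := by
          rw [← AddCircle.coe_add, sub_add_cancel]
      _ ≤ π * h + π * ((m + 1 : ℕ) * h) :=
          (norm_add_le _ _).trans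
            (add_le_add (norm_le_of_chi_ne_zero hchi) (norm_le_of_chiConv_ne_zero (m + 1) φ hφ))
      _ = π * ((m + 2 : ℕ) * h) := by push_cast; ring

theorem integral_chiConv (h0 : 0 < h) (h1 : h ≤ 1) :
    ∀ m, m ≠ 0 → ∫ θ in (0:ℝ)..2 * π, chiConv h m θ = 2 * π
  | 0, hm => absurd rfl hm
  | 1, _ => integral_chi h0 h1
  | m + 2, _ => by
    rw [chiConv, integral_conv (chi_periodic h) (measurable_chi h) (norm_chi_le h)
      (intervalIntegrable_chiConv h _), integral_chi h0 h1,
      integral_chiConv h0 h1 (m + 1) m.succ_ne_zero]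
    field_simp

end ChiConv

section CosSign

noncomputable def cosSign (n : ℕ) (θ : ℝ) : ℝ := if 0 ≤ cos (n * θ) then 1 else -1

variable {n : ℕ}

theorem measurable_cosSign (n : ℕ) : Measurable (cosSign n) :=
  Measurable.ite (measurableSet_le measurable_const (by fun_prop)) measurable_const
    measurable_const

theorem abs_cosSign_le_one (n : ℕ) (θ : ℝ) : |cosSign n θ| ≤ 1 := by
  unfold cosSign; split_ifs <;> simp

theorem cosSign_periodic (n : ℕ) : Periodic (cosSign n) (2 * π) := fun θ => by
  have : (n : ℝ) * (θ + 2 * π) = n * θ + (n : ℤ) * (2 * π) := by push_cast; ring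
  simp only [cosSign, this, cos_add_int_mul_two_pi]

theorem cosSign_add_pi_div (hn : n ≠ 0) {θ : ℝ} (hθ : cos (n * θ) ≠ 0) :
    cosSign n (θ + π / n) = -cosSign n θ := by
  have : (n : ℝ) * (θ + π / n) = n * θ + π := by field_simp
  simp only [cosSign, this, cos_add_pi]
  rcases hθ.lt_or_gt with hneg | hpos
  · simp [hneg.le, not_le.2 hneg]
  · simp [hpos.le, not_le.2 (neg_neg_of_pos hpos)]

theorem ae_cos_mul_ne_zero (hn : n ≠ 0) : ∀ᵐ θ : ℝ, cos (n * θ) ≠ 0 := by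
  refine measure_mono_null (fun θ (hθ : ¬cos (n * θ) ≠ 0) => ?_)
    ((countable_range fun k : ℤ => (2 * k + 1) * π / 2 / n).measure_zero volume)
  obtain ⟨k, hk⟩ := cos_eq_zero_iff.1 (not_not.1 hθ)
  exact ⟨k, show (2 * k + 1) * π / 2 / n = θ by rw [← hk]; field_simp⟩

theorem Function.Periodic.intervalIntegral_eq_zero_of_ae_comp_add_eq_mul {F : ℝ → ℂ} {T c : ℝ}
    {a : ℂ} (hF : Periodic F T) (hc : ∀ᵐ x : ℝ, F (x + c) = a * F x) (ha : a ≠ 1) :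
    ∫ x in (0:ℝ)..T, F x = 0 := by
  have hshift := hF.intervalIntegral_comp_add_right c
  rw [intervalIntegral.integral_congr_ae (hc.mono fun x hx _ => hx),
    intervalIntegral.integral_const_mul] at hshift
  have : (a - 1) * ∫ x in (0:ℝ)..T, F x = 0 := by linear_combination hshift
  exact (mul_eq_zero.1 this).resolve_left (sub_ne_zero.2 ha)

theorem exp_mul_I_ne_neg_one {x : ℝ} (hx : |x| < π) : Complex.exp (x * Complex.I) ≠ -1 := by
  intro h
  have hcos : cos x = -1 := by
    simpa using congrArg Complex.re h
  obtain ⟨k, hk⟩ := Real.cos_eq_neg_one_iff.1 hcos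
  rw [← hk, abs_lt] at hx
  have : (k : ℝ) < 0 := by nlinarith [pi_pos]
  have : -1 < (k : ℝ) := by nlinarith [pi_pos]
  norm_cast at *
  omega

theorem integral_exp_mul_cosSign {k : ℤ} (hk : |k| < n) :
    ∫ θ in (0:ℝ)..2 * π, Complex.exp (k * θ * Complex.I) * (cosSign n θ : ℂ) = 0 := by
  have hn : n ≠ 0 := by rintro rfl; exact (abs_nonneg k).not_gt hk
  refine Periodic.intervalIntegral_eq_zero_of_ae_comp_add_eq_mul (c := π / n)
    (a := -Complex.exp ((k * π / n : ℝ) * Complex.I)) (fun θ => ?_) ?_ ?_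
  · have : (k : ℂ) * ↑(θ + 2 * π) * Complex.I = k * θ * Complex.I + k * (2 * π * Complex.I) := by
      push_cast; ring
    rw [cosSign_periodic n θ, this, Complex.exp_add, Complex.exp_int_mul_two_pi_mul_I, mul_one]
  · filter_upwards [ae_cos_mul_ne_zero hn] with θ hθ
    rw [cosSign_add_pi_div hn hθ]
    push_cast
    rw [show (k : ℂ) * (θ + π / n) * Complex.I = k * π / n * Complex.I + k * θ * Complex.I by ring,
      Complex.exp_add]
    ring
  · intro h
    refine exp_mul_I_ne_neg_one ?_ (neg_eq_iff_eq_neg.1 h)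
    have : |(k : ℝ)| < n := by exact_mod_cast hk
    rw [abs_div, abs_mul, abs_of_pos pi_pos, Nat.abs_cast, div_lt_iff₀ (by positivity)]
    nlinarith [pi_pos]

theorem cos_mul_nonneg_of_norm_le {θ : ℝ} (hθ : ‖(θ : AddCircle (2 * π))‖ ≤ π / (2 * n)) :
    0 ≤ cos (n * θ) := by
  rw [AddCircle.norm_eq] at hθ
  set r := round ((2 * π)⁻¹ * θ)
  have hcos : cos (n * θ) = cos (n * (θ - r * (2 * π))) := by
    rw [show (n : ℝ) * θ = n * (θ - r * (2 * π)) + (n * r : ℤ) * (2 * π) by push_cast; ring,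
      cos_add_int_mul_two_pi]
  have hbound : |n * (θ - r * (2 * π))| ≤ π / 2 := by
    rcases eq_or_ne n 0 with rfl | hn
    · simpa using (by positivity : (0:ℝ) ≤ π / 2)
    rw [abs_mul, Nat.abs_cast]
    calc (n : ℝ) * |θ - r * (2 * π)| ≤ n * (π / (2 * n)) := by gcongr
      _ = π / 2 := by field_simp
  rw [hcos]
  exact cos_nonneg_of_mem_Icc ⟨by linarith [(abs_le.1 hbound).1], (abs_le.1 hbound).2⟩

end CosSign

section Duality

variable {N : ℕ}

theorem continuous_of_mem_trigPoly {t : ℝ → ℂ} (ht : t ∈ trigPoly N) : Continuous t := by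
  obtain ⟨c, rfl⟩ := ht
  fun_prop

theorem integral_mul_eq_zero_of_mem_trigPoly {t σ : ℝ → ℂ} (ht : t ∈ trigPoly N)
    (hσ : IntervalIntegrable σ volume 0 (2 * π))
    (horth : ∀ k : ℤ, |k| ≤ N →
      ∫ θ in (0:ℝ)..2 * π, Complex.exp (k * θ * Complex.I) * σ θ = 0) :
    ∫ θ in (0:ℝ)..2 * π, t θ * σ θ = 0 := by
  obtain ⟨c, rfl⟩ := ht
  simp_rw [Finset.sum_mul, mul_assoc (c _)]
  rw [intervalIntegral.integral_finsetSum fun k _ =>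
    (hσ.continuousOn_mul (by fun_prop)).const_mul (c k)]
  refine Finset.sum_eq_zero fun k hk => ?_
  rw [intervalIntegral.integral_const_mul, horth k (abs_le.2 (Finset.mem_Icc.1 hk)), mul_zero]

theorem one_le_L1norm_sub_of_orthogonal_sign {f σ : ℝ → ℝ} {t : ℝ → ℂ}
    (hf : IntervalIntegrable f volume 0 (2 * π)) (hmass : ∫ θ in (0:ℝ)..2 * π, f θ = 2 * π)
    (hσ : Measurable σ) (hσ1 : ∀ θ, |σ θ| ≤ 1) (hfσ : ∀ θ, f θ ≠ 0 → σ θ = 1)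
    (horth : ∀ k : ℤ, |k| ≤ N →
      ∫ θ in (0:ℝ)..2 * π, Complex.exp (k * θ * Complex.I) * σ θ = 0)
    (ht : t ∈ trigPoly N) : 1 ≤ L1norm (fun θ => f θ - t θ) := by
  have hσC : IntervalIntegrable (fun θ => (σ θ : ℂ)) volume 0 (2 * π) :=
    intervalIntegrable_const.mono_fun' (by fun_prop) (ae_of_all _ fun θ => by simpa using hσ1 θ)
  have hfC : IntervalIntegrable (fun θ => (f θ : ℂ)) volume 0 (2 * π) :=
    intervalIntegrable_iff.2 (intervalIntegrable_iff.1 hf).ofReal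
  have htσ := hσC.continuousOn_mul (continuous_of_mem_trigPoly ht).continuousOn
  have hpair : ∫ θ in (0:ℝ)..2 * π, (f θ - t θ) * σ θ = (2 * π : ℝ) := by
    have hfσ' (θ : ℝ) : (f θ - t θ) * σ θ = f θ - t θ * σ θ := by
      by_cases h0 : f θ = 0
      · simp [h0]
      · simp [hfσ θ h0]
    simp_rw [hfσ']
    rw [intervalIntegral.integral_sub hfC htσ, intervalIntegral.integral_ofReal, hmass,
      integral_mul_eq_zero_of_mem_trigPoly ht hσC horth, sub_zero]
  have hmass_le : 2 * π ≤ ∫ θ in (0:ℝ)..2 * π, ‖f θ - t θ‖ :=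
    calc 2 * π = ‖∫ θ in (0:ℝ)..2 * π, (f θ - t θ) * σ θ‖ := by
          rw [hpair, Complex.norm_real, Real.norm_of_nonneg (by positivity)]
      _ ≤ ∫ θ in (0:ℝ)..2 * π, ‖f θ - t θ‖ :=
          intervalIntegral.norm_integral_le_of_norm_le (by positivity)
            (ae_of_all _ fun θ _ => by
              rw [norm_mul, Complex.norm_real, Real.norm_eq_abs]
              exact mul_le_of_le_one_right (norm_nonneg _) (hσ1 θ))
            (hfC.sub ((continuous_of_mem_trigPoly ht).intervalIntegrable _ _)).norm
  rw [L1norm, one_div, ← div_eq_inv_mul, le_div_iff₀ (by positivity), one_mul]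
  exact hmass_le

theorem bestApprox_eq_one_of_orthogonal_sign {f σ : ℝ → ℝ}
    (hf : IntervalIntegrable f volume 0 (2 * π)) (hf0 : ∀ θ, 0 ≤ f θ)
    (hmass : ∫ θ in (0:ℝ)..2 * π, f θ = 2 * π)
    (hσ : Measurable σ) (hσ1 : ∀ θ, |σ θ| ≤ 1) (hfσ : ∀ θ, f θ ≠ 0 → σ θ = 1)
    (horth : ∀ k : ℤ, |k| ≤ N →
      ∫ θ in (0:ℝ)..2 * π, Complex.exp (k * θ * Complex.I) * σ θ = 0) :
    bestApprox N (fun θ => (f θ : ℂ)) = 1 := by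
  refine IsLeast.csInf_eq ⟨⟨0, ⟨fun _ => 0, by funext; simp⟩, ?_⟩, ?_⟩
  · simp only [L1norm, Pi.zero_apply, sub_zero, Complex.norm_real, Real.norm_of_nonneg (hf0 _),
      hmass]
    field_simp
  · rintro _ ⟨t, ht, rfl⟩
    exact one_le_L1norm_sub_of_orthogonal_sign hf hmass hσ hσ1 hfσ horth ht

end Duality

/-- For `0 < h ≤ 1/(2mn)`, `E_{n−1}(χ_h^m)_{L¹} = 1`. -/
theorem bestApprox_chiConv_eq_one (n m : ℕ) (hn : 1 ≤ n) (hm : 1 ≤ m) (h : ℝ)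
    (h0 : 0 < h) (hup : h ≤ 1 / (2 * (m:ℝ) * (n:ℝ))) :
    bestApprox (n - 1) (fun θ => (chiConv h m θ : ℂ)) = 1 := by
  have hmn : (1:ℝ) ≤ m * n :=
    one_le_mul_of_one_le_of_one_le (by exact_mod_cast hm) (by exact_mod_cast hn)
  have hup' : h * (2 * m * n) ≤ 1 := (le_div_iff₀ (by positivity)).1 hup
  have hmh : m * h ≤ 1 / (2 * n) := by
    rw [le_div_iff₀ (by positivity)]
    linarith
  have h1 : h ≤ 1 := by nlinarith
  refine bestApprox_eq_one_of_orthogonal_sign (σ := cosSign n) (intervalIntegrable_chiConv h m)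
    (chiConv_nonneg h0.le m) (integral_chiConv h0 h1 m (by omega)) (measurable_cosSign n)
    (abs_cosSign_le_one n) (fun θ hθ => if_pos (cos_mul_nonneg_of_norm_le ?_))
    (fun k hk => integral_exp_mul_cosSign (by omega))
  calc ‖(θ : AddCircle (2 * π))‖ ≤ π * (m * h) := norm_le_of_chiConv_ne_zero m θ hθ
    _ ≤ π * (1 / (2 * n)) := by gcongr
    _ = π / (2 * n) := by ring
end
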